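/- arXiv:1303.4274 — 2 statements merged into one kernel-verified Lean document; each statement's English description precedes it below -/
import Mathlib

section
/- Let d ≥ 1 and let S_d denote the space of real symmetric d×d matrices equipped with the Loewner order (A ≤ B iff B − A is positive semidefinite). Suppose G : S_d → ℝ is monotone (A ≤ B implies G(A) ≤ G(B)), subadditive (G(A + B) ≤ G(A) + G(B)), and positively homogeneous (G(λA) = λG(A) for all λ ≥ 0). Then there exists a bounded, convex and closed subset Γ of the set S_d⁺ of positive semidefinite symmetric d×d matrices such that G(A) = (1/2) · sup_{γ ∈ Γ} tr(γA) for all A ∈ S_d. -/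
/-!
Extend `G` to all matrices by `p B = G (sym B)`, where `sym` is the symmetric part. Then `p` is
sublinear, so by Hahn–Banach every symmetric `A` admits a linear functional `g ≤ p` with
`g A = G A`; writing `2 g = tr (γ * ·)` and symmetrizing `γ` shows that the supremum over
`Γ = {γ symmetric | tr (γ B) ≤ 2 G B for all symmetric B}` is attained and equals `2 G A`.
Testing the inequality at `B = -x xᵀ`, where `G B ≤ G 0 = 0` by monotonicity, shows `γ ≥ 0`,
and testing it at `B = 1` gives `tr γ ≤ 2 G 1`, which bounds the entries of a positive
semidefinite `γ`.
-/

open Matrix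

section Sublinear

variable {E : Type*} [AddCommGroup E] [Module ℝ E] {p : E → ℝ}

theorem map_zero_of_sublinear (hom : ∀ c : ℝ, 0 < c → ∀ x, p (c • x) = c * p x) : p 0 = 0 := by
  have := hom 2 two_pos 0
  rw [smul_zero] at this
  linarith

theorem mul_le_map_smul_of_sublinear (hom : ∀ c : ℝ, 0 < c → ∀ x, p (c • x) = c * p x)
    (add : ∀ x y, p (x + y) ≤ p x + p y) (t : ℝ) (x : E) : t * p x ≤ p (t • x) := by
  rcases lt_trichotomy t 0 with ht | rfl | ht
  · have := add (t • x) ((-t) • x)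
    rw [← add_smul, add_neg_cancel, zero_smul, map_zero_of_sublinear hom,
      hom _ (neg_pos.2 ht)] at this
    linarith
  · simp [map_zero_of_sublinear hom]
  · exact (hom t ht x).ge

theorem exists_linearMap_le_sublinear_eq (hom : ∀ c : ℝ, 0 < c → ∀ x, p (c • x) = c * p x)
    (add : ∀ x y, p (x + y) ≤ p x + p y) (x : E) :
    ∃ g : E →ₗ[ℝ] ℝ, (∀ y, g y ≤ p y) ∧ g x = p x := by
  have hker : ∀ c : ℝ, c • x = 0 → RingHom.id ℝ c • p x = 0 := by
    intro c hc
    rcases smul_eq_zero.1 hc with rfl | rfl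
    · simp
    · simp [map_zero_of_sublinear hom]
  set f : E →ₗ.[ℝ] ℝ := LinearPMap.mkSpanSingleton' x (p x) hker
  have hf : ∀ y : f.domain, f y ≤ p y := by
    rintro ⟨y, hy⟩
    obtain ⟨t, rfl⟩ := Submodule.mem_span_singleton.1 hy
    rw [LinearPMap.mkSpanSingleton'_apply, RingHom.id_apply, smul_eq_mul]
    exact mul_le_map_smul_of_sublinear hom add t x
  obtain ⟨g, hgf, hgp⟩ := exists_extension_of_le_sublinear f p hom add hf
  exact ⟨g, hgp, (hgf ⟨x, Submodule.mem_span_singleton_self x⟩).trans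
    (LinearPMap.mkSpanSingleton'_apply_self _ _ _ _)⟩

end Sublinear

theorem Matrix.exists_trace_mul_eq {m n R : Type*} [Fintype m] [Fintype n] [DecidableEq m]
    [DecidableEq n] [CommSemiring R] (g : Matrix m n R →ₗ[R] R) :
    ∃ γ : Matrix n m R, ∀ B, (γ * B).trace = g B := by
  refine ⟨of fun i j => g (single j i 1), fun B => ?_⟩
  conv_rhs => rw [matrix_eq_sum_single B]
  have hsingle : ∀ i j, single i j (B i j) = B i j • single i j 1 := by simp [smul_single]
  simp only [trace, diag, mul_apply, of_apply, map_sum, hsingle, map_smul, smul_eq_mul]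
  rw [Finset.sum_comm]
  simp only [mul_comm]

section SymmetricMatrices

variable {n : Type*}

theorem Matrix.isSymm_iff_isSelfAdjoint {α : Type*} [Star α] [TrivialStar α] {A : Matrix n n α} :
    A.IsSymm ↔ IsSelfAdjoint A :=
  isHermitian_iff_isSymm.symm

theorem Matrix.isSymm_selfAdjointPart (A : Matrix n n ℝ) :
    (selfAdjointPart ℝ A : Matrix n n ℝ).IsSymm :=
  isSymm_iff_isSelfAdjoint.2 (selfAdjointPart ℝ A).2

theorem Matrix.trace_selfAdjointPart_mul [Fintype n] {A B : Matrix n n ℝ} (hB : B.IsSymm) :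
    ((selfAdjointPart ℝ A : Matrix n n ℝ) * B).trace = (A * B).trace := by
  have : (star A * B).trace = (A * B).trace := by
    rw [star_eq_conjTranspose, conjTranspose_eq_transpose_of_trivial]
    calc (Aᵀ * B).trace = (Aᵀ * Bᵀ).trace := by rw [hB.eq]
      _ = (A * B).trace := trace_transpose_mul A B
  simp only [selfAdjointPart_apply_coe, smul_mul, add_mul, trace_smul, trace_add, this]
  rw [invOf_eq_inv, smul_eq_mul]
  ring

theorem Matrix.PosSemidef.abs_apply_le_trace [Fintype n] [DecidableEq n] {A : Matrix n n ℝ}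
    (hA : A.PosSemidef) (i j : n) : |A i j| ≤ A.trace := by
  have hdiag : ∀ k, A k k ≤ A.trace := fun k =>
    Finset.single_le_sum (fun l _ => hA.diag_nonneg (i := l)) (Finset.mem_univ k)
  have hji : A j i = A i j := by simpa using hA.1.apply i j
  have quad : ∀ c : ℝ, 0 ≤ A i i + 2 * c * A i j + c ^ 2 * A j j := by
    intro c
    have := hA.dotProduct_mulVec_nonneg (Pi.single i 1 + c • Pi.single j 1)
    simp only [star_trivial, mulVec_add, mulVec_single, MulOpposite.op_one, one_smul, mulVec_smul,
      dotProduct_add, add_dotProduct, single_dotProduct, col_apply, one_mul, smul_dotProduct, hji,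
      smul_eq_mul, dotProduct_smul] at this
    linarith
  rw [abs_le]
  constructor <;> nlinarith [quad 1, quad (-1), hdiag i, hdiag j]

variable [Fintype n]

def traceDominatedSet (G : Matrix n n ℝ → ℝ) : Set (Matrix n n ℝ) :=
  {γ | γ.IsSymm ∧ ∀ B : Matrix n n ℝ, B.IsSymm → (γ * B).trace ≤ 2 * G B}

variable {G : Matrix n n ℝ → ℝ}

theorem isClosed_traceDominatedSet : IsClosed (traceDominatedSet G) := by
  have hsymm : IsClosed {γ : Matrix n n ℝ | γ.IsSymm} :=
    isClosed_eq continuous_id.matrix_transpose continuous_id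
  have hle : ∀ B : Matrix n n ℝ, IsClosed {γ : Matrix n n ℝ | (γ * B).trace ≤ 2 * G B} := fun B =>
    isClosed_le (continuous_id.matrix_mul continuous_const).matrix_trace continuous_const
  simpa only [traceDominatedSet, Set.ofPred_and, Set.ofPred_forall] using
    hsymm.inter (isClosed_iInter fun B => isClosed_iInter fun _ => hle B)

theorem convex_traceDominatedSet : Convex ℝ (traceDominatedSet G) := by
  rintro γ₁ ⟨hsymm₁, hle₁⟩ γ₂ ⟨hsymm₂, hle₂⟩ a b ha hb hab
  refine ⟨(hsymm₁.smul a).add (hsymm₂.smul b), fun B hB => ?_⟩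
  simp only [add_mul, smul_mul, trace_add, trace_smul, smul_eq_mul]
  calc a * (γ₁ * B).trace + b * (γ₂ * B).trace ≤ a * (2 * G B) + b * (2 * G B) := by
        gcongr
        exacts [hle₁ B hB, hle₂ B hB]
    _ = 2 * G B := by rw [← add_mul, hab, one_mul]

theorem posSemidef_of_mem_traceDominatedSet
    (hmono : ∀ A B : Matrix n n ℝ, A.IsSymm → B.IsSymm → (B - A).PosSemidef → G A ≤ G B)
    (hG0 : G 0 = 0) {γ : Matrix n n ℝ} (hγ : γ ∈ traceDominatedSet G) : γ.PosSemidef := by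
  refine posSemidef_iff_dotProduct_mulVec.2 ⟨isHermitian_iff_isSymm.2 hγ.1, fun x => ?_⟩
  have hxx : (vecMulVec x x).PosSemidef := by simpa using posSemidef_vecMulVec_self_star x
  have hxx_symm : (vecMulVec x x).IsSymm := isHermitian_iff_isSymm.1 hxx.1
  have hG : G (-vecMulVec x x) ≤ 0 :=
    hG0 ▸ hmono _ 0 hxx_symm.neg isSymm_zero (by simpa using hxx)
  have htr := hγ.2 _ hxx_symm.neg
  rw [mul_neg, trace_neg, mul_vecMulVec, trace_vecMulVec] at htr
  rw [star_trivial, dotProduct_comm]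
  linarith

variable [DecidableEq n]

theorem abs_apply_le_of_mem_traceDominatedSet {γ : Matrix n n ℝ} (hγ : γ ∈ traceDominatedSet G)
    (hpsd : γ.PosSemidef) (i j : n) : |γ i j| ≤ 2 * G 1 :=
  (hpsd.abs_apply_le_trace i j).trans (mul_one γ ▸ hγ.2 1 isSymm_one)

theorem exists_mem_traceDominatedSet_trace_mul_eq
    (hsubadd : ∀ A B : Matrix n n ℝ, A.IsSymm → B.IsSymm → G (A + B) ≤ G A + G B)
    (hhom : ∀ A : Matrix n n ℝ, A.IsSymm → ∀ l : ℝ, 0 ≤ l → G (l • A) = l * G A)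
    {A : Matrix n n ℝ} (hA : A.IsSymm) :
    ∃ γ ∈ traceDominatedSet G, (γ * A).trace = 2 * G A := by
  set p : Matrix n n ℝ → ℝ := fun B => G (selfAdjointPart ℝ B)
  have hpG : ∀ {B : Matrix n n ℝ}, B.IsSymm → p B = G B := fun hB => by
    simp only [p, (isSymm_iff_isSelfAdjoint.1 hB).coe_selfAdjointPart_apply ℝ]
  have hp_hom : ∀ c : ℝ, 0 < c → ∀ B, p (c • B) = c * p B := fun c hc B => by
    simp only [p, map_smul, selfAdjoint.val_smul, hhom _ (isSymm_selfAdjointPart B) c hc.le]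
  have hp_add : ∀ B C, p (B + C) ≤ p B + p C := fun B C => by
    simpa only [p, map_add, AddSubgroup.coe_add] using
      hsubadd _ _ (isSymm_selfAdjointPart B) (isSymm_selfAdjointPart C)
  obtain ⟨g, hgp, hgA⟩ := exists_linearMap_le_sublinear_eq hp_hom hp_add A
  obtain ⟨γ, hγ⟩ := exists_trace_mul_eq ((2 : ℝ) • g)
  refine ⟨selfAdjointPart ℝ γ, ⟨isSymm_selfAdjointPart γ, fun B hB => ?_⟩, ?_⟩
  · rw [trace_selfAdjointPart_mul hB, hγ, ← hpG hB, LinearMap.smul_apply, smul_eq_mul]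
    linarith [hgp B]
  · rw [trace_selfAdjointPart_mul hA, hγ, LinearMap.smul_apply, smul_eq_mul, hgA, hpG hA]

end SymmetricMatrices

theorem sublinear_monotone_representation_general
    (d : ℕ) (G : Matrix (Fin d) (Fin d) ℝ → ℝ)
    (hmono : ∀ A B : Matrix (Fin d) (Fin d) ℝ, A.IsSymm → B.IsSymm →
      (B - A).PosSemidef → G A ≤ G B)
    (hsubadd : ∀ A B : Matrix (Fin d) (Fin d) ℝ, A.IsSymm → B.IsSymm →
      G (A + B) ≤ G A + G B)
    (hhom : ∀ A : Matrix (Fin d) (Fin d) ℝ, A.IsSymm → ∀ l : ℝ, 0 ≤ l →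
      G (l • A) = l * G A) :
    ∃ Γ : Set (Matrix (Fin d) (Fin d) ℝ),
      (∃ C : ℝ, ∀ γ ∈ Γ, ∀ i j, |γ i j| ≤ C) ∧
      Convex ℝ Γ ∧
      IsClosed Γ ∧
      (∀ γ ∈ Γ, γ.PosSemidef) ∧
      ∀ A : Matrix (Fin d) (Fin d) ℝ, A.IsSymm →
        G A = (1 / 2) * sSup ((fun γ => (γ * A).trace) '' Γ) := by
  have hG0 : G 0 = 0 := by simpa using hhom 0 isSymm_zero 0 le_rfl
  have hpsd : ∀ γ ∈ traceDominatedSet G, γ.PosSemidef := fun γ hγ =>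
    posSemidef_of_mem_traceDominatedSet hmono hG0 hγ
  refine ⟨traceDominatedSet G,
    ⟨2 * G 1, fun γ hγ => abs_apply_le_of_mem_traceDominatedSet hγ (hpsd γ hγ)⟩,
    convex_traceDominatedSet, isClosed_traceDominatedSet, hpsd, fun A hA => ?_⟩
  obtain ⟨γ, hγ, hγA⟩ := exists_mem_traceDominatedSet_trace_mul_eq hsubadd hhom hA
  have hmax : IsGreatest ((fun γ => (γ * A).trace) '' traceDominatedSet G) (2 * G A) :=
    ⟨⟨γ, hγ, hγA⟩, by rintro _ ⟨γ', hγ', rfl⟩; exact hγ'.2 A hA⟩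
  rw [hmax.csSup_eq]
  ring

/-- **Representation of a monotone sublinear function on symmetric matrices.**
If `G` on the space of real symmetric `d × d` matrices (with the Loewner order:
`A ≤ B` iff `B - A` is positive semidefinite) is monotone, subadditive and
positively homogeneous, then there exists a bounded, convex and closed set `Γ`
of positive semidefinite symmetric matrices such that
`G A = (1/2) * sup_{γ ∈ Γ} tr (γ * A)` for every symmetric `A`. -/
theorem sublinear_monotone_representation
    (d : ℕ) (hd : 1 ≤ d) (G : Matrix (Fin d) (Fin d) ℝ → ℝ)
    (hmono : ∀ A B : Matrix (Fin d) (Fin d) ℝ, A.IsSymm → B.IsSymm →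
      (B - A).PosSemidef → G A ≤ G B)
    (hsubadd : ∀ A B : Matrix (Fin d) (Fin d) ℝ, A.IsSymm → B.IsSymm →
      G (A + B) ≤ G A + G B)
    (hhom : ∀ A : Matrix (Fin d) (Fin d) ℝ, A.IsSymm → ∀ l : ℝ, 0 ≤ l →
      G (l • A) = l * G A) :
    ∃ Γ : Set (Matrix (Fin d) (Fin d) ℝ),
      (∃ C : ℝ, ∀ γ ∈ Γ, ∀ i j, |γ i j| ≤ C) ∧
      Convex ℝ Γ ∧
      IsClosed Γ ∧
      (∀ γ ∈ Γ, γ.PosSemidef) ∧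
      ∀ A : Matrix (Fin d) (Fin d) ℝ, A.IsSymm →
        G A = (1 / 2) * sSup ((fun γ => (γ * A).trace) '' Γ) :=
  sublinear_monotone_representation_general d G hmono hsubadd hhom
end

section
/- Let Φ : ℝ → ℝ satisfy the local Lipschitz condition |Φ(x) − Φ(x′)| ≤ L(1 + |x|^m + |x′|^m)|x − x′| for all x, x′ ∈ ℝ, where L > 0 and m is a positive integer. Let γ denote the standard Gaussian measure on ℝ (mean 0, variance 1) and fix a, b ∈ ℝ. Then there exists a constant L′ > 0, depending only on L, m, a and b, such that the function u(x) = ∫ Φ(x · exp(a + b·y)) dγ(y) satisfies |u(x) − u(x′)| ≤ L′(1 + |x|^m + |x′|^m)|x − x′| for all x, x′ ∈ ℝ. -/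
/-!
For `c ≥ 0` the hypothesis at the points `x c` and `x' c` gives
`|Φ (x c) - Φ (x' c)| ≤ L (1 + |x|^m + |x'|^m) |x - x'| (c + c^(m+1))`.
With `c = exp (a + b y)`, both `c` and `c^(m+1)` are exponentials of affine functions of a
Gaussian variable, hence integrable, so integrating in `y` gives the claim with
`L' = L · E[c + c^(m+1)] + 1`. The case `x' = 0` also dominates `Φ (x c)` by an integrable
function.
-/

open MeasureTheory ProbabilityTheory Filter Topology

def PolyLipschitzWith (L : ℝ) (m : ℕ) (Φ : ℝ → ℝ) : Prop :=
  ∀ x x' : ℝ, |Φ x - Φ x'| ≤ L * (1 + |x| ^ m + |x'| ^ m) * |x - x'|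

namespace PolyLipschitzWith

variable {Φ : ℝ → ℝ} {L : ℝ} {m : ℕ}

lemma nonneg (hΦ : PolyLipschitzWith L m Φ) : 0 ≤ L := by
  have h := (abs_nonneg _).trans (hΦ 1 0)
  rw [mul_assoc] at h
  exact nonneg_of_mul_nonneg_left h (by positivity)

lemma continuous (hΦ : PolyLipschitzWith L m Φ) : Continuous Φ := by
  refine continuous_iff_continuousAt.2 fun x => tendsto_iff_dist_tendsto_zero.2 ?_
  have hbound : Tendsto (fun x' => L * (1 + |x'| ^ m + |x| ^ m) * |x' - x|) (𝓝 x) (𝓝 0) := by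
    simpa using
      (by fun_prop : Continuous fun x' : ℝ => L * (1 + |x'| ^ m + |x| ^ m) * |x' - x|).tendsto x
  exact squeeze_zero (fun _ => dist_nonneg)
    (fun x' => (hΦ x' x).trans_eq' (Real.dist_eq _ _)) hbound

lemma abs_comp_mul_sub_comp_mul_le (hΦ : PolyLipschitzWith L m Φ) {c : ℝ} (hc : 0 ≤ c)
    (x x' : ℝ) :
    |Φ (x * c) - Φ (x' * c)| ≤ L * (1 + |x| ^ m + |x'| ^ m) * |x - x'| * (c + c ^ (m + 1)) := by
  have hL := hΦ.nonneg
  calc |Φ (x * c) - Φ (x' * c)|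
      ≤ L * (1 + |x * c| ^ m + |x' * c| ^ m) * |x * c - x' * c| := hΦ _ _
    _ = L * |x - x'| * (c + (|x| ^ m + |x'| ^ m) * c ^ (m + 1)) := by
        rw [← sub_mul, abs_mul, abs_mul, abs_mul, abs_of_nonneg hc, mul_pow, mul_pow, pow_succ]
        ring
    _ ≤ L * |x - x'| * (c + (|x| ^ m + |x'| ^ m) * c ^ (m + 1) +
          ((|x| ^ m + |x'| ^ m) * c + c ^ (m + 1))) := by
        exact mul_le_mul_of_nonneg_left (le_add_of_nonneg_right (by positivity)) (by positivity)
    _ = L * (1 + |x| ^ m + |x'| ^ m) * |x - x'| * (c + c ^ (m + 1)) := by ring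

variable {Ω : Type*} [MeasurableSpace Ω] {μ : Measure Ω} {g : Ω → ℝ}

lemma integrable_comp_mul [IsFiniteMeasure μ] (hΦ : PolyLipschitzWith L m Φ)
    (hg0 : ∀ y, 0 ≤ g y) (hg : Integrable g μ) (hgm : Integrable (fun y => g y ^ (m + 1)) μ)
    (x : ℝ) : Integrable (fun y => Φ (x * g y)) μ := by
  have hdom : Integrable (fun y => |Φ 0| +
      L * (1 + |x| ^ m + |0| ^ m) * |x - 0| * (g y + g y ^ (m + 1))) μ :=
    (integrable_const _).add ((hg.add hgm).const_mul _)
  refine hdom.mono' (hΦ.continuous.comp_aestronglyMeasurable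
    (hg.aestronglyMeasurable.const_mul x)) (ae_of_all _ fun y => ?_)
  have h := hΦ.abs_comp_mul_sub_comp_mul_le (hg0 y) x 0
  rw [zero_mul] at h
  rw [Real.norm_eq_abs]
  linarith [abs_sub_abs_le_abs_sub (Φ (x * g y)) (Φ 0)]

lemma abs_integral_comp_mul_sub_le [IsFiniteMeasure μ] (hΦ : PolyLipschitzWith L m Φ)
    (hg0 : ∀ y, 0 ≤ g y) (hg : Integrable g μ) (hgm : Integrable (fun y => g y ^ (m + 1)) μ)
    (x x' : ℝ) :
    |∫ y, Φ (x * g y) ∂μ - ∫ y, Φ (x' * g y) ∂μ|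
      ≤ L * (1 + |x| ^ m + |x'| ^ m) * |x - x'| * ∫ y, (g y + g y ^ (m + 1)) ∂μ := by
  have hx := hΦ.integrable_comp_mul hg0 hg hgm x
  have hx' := hΦ.integrable_comp_mul hg0 hg hgm x'
  rw [← integral_sub hx hx', ← integral_const_mul]
  exact abs_integral_le_integral_abs.trans <| integral_mono (hx.sub hx').abs
    ((hg.add hgm).const_mul _) fun y => hΦ.abs_comp_mul_sub_comp_mul_le (hg0 y) x x'

end PolyLipschitzWith

lemma integrable_exp_affine_pow_gaussianReal (μ : ℝ) (v : NNReal) (a b : ℝ) (k : ℕ) :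
    Integrable (fun y => Real.exp (a + b * y) ^ k) (gaussianReal μ v) := by
  refine ((integrable_exp_mul_gaussianReal (k * b)).const_mul (Real.exp (k * a))).congr
    (ae_of_all _ fun y => ?_)
  simp only [← Real.exp_add, ← Real.exp_nat_mul]
  ring_nf

theorem local_lipschitz_propagation_gaussian_general
    (Φ : ℝ → ℝ) (L : ℝ) (m : ℕ)
    (hΦ : ∀ x x' : ℝ, |Φ x - Φ x'| ≤ L * (1 + |x| ^ m + |x'| ^ m) * |x - x'|)
    (a b : ℝ) :
    ∃ L' > (0 : ℝ),
      (∀ x : ℝ, Integrable (fun y => Φ (x * Real.exp (a + b * y)))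
          (gaussianReal 0 1)) ∧
      ∀ x x' : ℝ,
        |(∫ y, Φ (x * Real.exp (a + b * y)) ∂(gaussianReal 0 1)) -
            ∫ y, Φ (x' * Real.exp (a + b * y)) ∂(gaussianReal 0 1)|
          ≤ L' * (1 + |x| ^ m + |x'| ^ m) * |x - x'| := by
  have hΦ : PolyLipschitzWith L m Φ := hΦ
  have hL := hΦ.nonneg
  have hg0 : ∀ y : ℝ, 0 ≤ Real.exp (a + b * y) := fun y => (Real.exp_pos _).le
  have hg : Integrable (fun y => Real.exp (a + b * y)) (gaussianReal 0 1) := by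
    simpa using integrable_exp_affine_pow_gaussianReal 0 1 a b 1
  have hgm := integrable_exp_affine_pow_gaussianReal 0 1 a b (m + 1)
  set I := ∫ y, (Real.exp (a + b * y) + Real.exp (a + b * y) ^ (m + 1)) ∂(gaussianReal 0 1)
  have hI : 0 ≤ I := integral_nonneg fun y => by positivity
  refine ⟨L * I + 1, by positivity, hΦ.integrable_comp_mul hg0 hg hgm, fun x x' => ?_⟩
  calc _ ≤ L * (1 + |x| ^ m + |x'| ^ m) * |x - x'| * I :=
        hΦ.abs_integral_comp_mul_sub_le hg0 hg hgm x x'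
    _ = L * I * (1 + |x| ^ m + |x'| ^ m) * |x - x'| := by ring
    _ ≤ (L * I + 1) * (1 + |x| ^ m + |x'| ^ m) * |x - x'| := by gcongr; linarith

/-- **The local Lipschitz property propagates under a Gaussian integral.**
If `|Φ x - Φ x'| ≤ L (1 + |x|^m + |x'|^m) |x - x'|` for all `x, x'`, then for
any `a b : ℝ` there is a constant `L' > 0` (depending only on `L, m, a, b`)
such that `u x = ∫ Φ (x * exp (a + b y)) dγ(y)` (with `γ` the standard
Gaussian measure) is well defined and satisfies
`|u x - u x'| ≤ L' (1 + |x|^m + |x'|^m) |x - x'|`. -/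
theorem local_lipschitz_propagation_gaussian
    (Φ : ℝ → ℝ) (L : ℝ) (hL : 0 < L) (m : ℕ) (hm : 1 ≤ m)
    (hΦ : ∀ x x' : ℝ, |Φ x - Φ x'| ≤ L * (1 + |x| ^ m + |x'| ^ m) * |x - x'|)
    (a b : ℝ) :
    ∃ L' > (0 : ℝ),
      (∀ x : ℝ, Integrable (fun y => Φ (x * Real.exp (a + b * y)))
          (gaussianReal 0 1)) ∧
      ∀ x x' : ℝ,
        |(∫ y, Φ (x * Real.exp (a + b * y)) ∂(gaussianReal 0 1)) -
            ∫ y, Φ (x' * Real.exp (a + b * y)) ∂(gaussianReal 0 1)|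
          ≤ L' * (1 + |x| ^ m + |x'| ^ m) * |x - x'| :=
  local_lipschitz_propagation_gaussian_general Φ L m hΦ a b
end
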